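/- arXiv:1812.11197 — 2 statements merged into one kernel-verified Lean document; each statement's English description precedes it below -/
import Mathlib

section
/- The Wright function M_μ(z) = ∑_{n=1}^∞ (-z)^{n-1} / ((n-1)! Γ(1 - μn)) defines an entire function of z for each fixed μ with 0 < μ < 1. -/
/-!
By the reflection formula, `|1 / Γ(1 - μx)| ≤ Γ(μx) / π = Γ(μx + 1) / (π μ x)`, and
log-convexity of `Γ` between `1` and `x + 1` gives `Γ(μx + 1) ≤ Γ(x + 1) ^ μ`. Hence the
`n`-th Taylor coefficient of `M_μ` is at most `(π μ)⁻¹ / (n!) ^ (1 - μ)`, and since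
`1 - μ > 0` the power series converges on all of `ℂ`, uniformly on every disc.
-/

/-- The Wright function `M_μ(z) = ∑_{n=1}^∞ (-z)^{n-1} / ((n-1)! Γ(1-μn))`, written with the
index shift `n ↦ n+1`.  Terms where `1 - μ(n+1)` is a nonpositive integer vanish, since
`Real.Gamma` is `0` there (so its inverse is `0`). -/
noncomputable def wright (μ : ℝ) (z : ℂ) : ℂ :=
  ∑' n : ℕ, (-z) ^ n * ((n.factorial : ℂ) * (Real.Gamma (1 - μ * (n + 1)) : ℂ))⁻¹

open Real
open scoped Nat

namespace Real

/-- Also valid at the poles of `Γ (1 - x)`, where both sides are `0`. -/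
theorem inv_Gamma_one_sub_eq {x : ℝ} (hx : Gamma x ≠ 0) :
    (Gamma (1 - x))⁻¹ = Gamma x * sin (π * x) / π := by
  have h : Gamma (1 - x) = π / sin (π * x) / Gamma x :=
    eq_div_of_mul_eq hx (by rw [mul_comm, Gamma_mul_Gamma_one_sub])
  rw [h, inv_div, div_div_eq_mul_div]

theorem abs_inv_Gamma_one_sub_le {x : ℝ} (hx : 0 < x) :
    |(Gamma (1 - x))⁻¹| ≤ Gamma x / π := by
  have hΓ := Gamma_pos_of_pos hx
  rw [inv_Gamma_one_sub_eq hΓ.ne', abs_div, abs_mul, abs_of_pos hΓ, abs_of_pos pi_pos]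
  gcongr
  exact mul_le_of_le_one_right hΓ.le (abs_sin_le_one _)

theorem Gamma_mul_add_one_le_rpow {μ x : ℝ} (hμ0 : 0 < μ) (hμ1 : μ < 1) (hx : -1 < x) :
    Gamma (μ * x + 1) ≤ Gamma (x + 1) ^ μ := by
  have h := Gamma_mul_add_mul_le_rpow_Gamma_mul_rpow_Gamma (by linarith : 0 < x + 1) one_pos
    hμ0 (sub_pos.2 hμ1) (add_sub_cancel μ 1)
  rw [Gamma_one, one_rpow, mul_one, mul_one] at h
  convert h using 2
  ring

theorem abs_inv_Gamma_one_sub_mul_le {μ x : ℝ} (hμ0 : 0 < μ) (hμ1 : μ < 1) (hx : 0 < x) :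
    |(Gamma (1 - μ * x))⁻¹| ≤ Gamma (x + 1) ^ μ / (π * μ * x) := by
  have hμx : 0 < μ * x := mul_pos hμ0 hx
  calc |(Gamma (1 - μ * x))⁻¹| ≤ Gamma (μ * x) / π := abs_inv_Gamma_one_sub_le hμx
    _ = Gamma (μ * x + 1) / (π * μ * x) := by
      rw [Gamma_add_one hμx.ne']
      field_simp
    _ ≤ Gamma (x + 1) ^ μ / (π * μ * x) := by
      gcongr
      exact Gamma_mul_add_one_le_rpow hμ0 hμ1 (by linarith)

end Real

theorem summable_pow_div_factorial_rpow {a R : ℝ} (ha : 0 < a) (hR : 0 ≤ R) :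
    Summable fun n : ℕ => R ^ n / (n ! : ℝ) ^ a := by
  set u := R ^ a⁻¹
  have hu : 0 ≤ u := rpow_nonneg hR _
  -- The terms are `(u ^ n / n!) ^ a`, and `u ^ n / n!` decays like `2 ^ (-n)`.
  have hgeom : Summable fun n : ℕ => exp (2 * u) ^ a * ((1 / 2 : ℝ) ^ a) ^ n :=
    (summable_geometric_of_lt_one (by positivity)
      (rpow_lt_one (by norm_num) (by norm_num) ha)).mul_left _
  refine hgeom.of_nonneg_of_le (fun n => by positivity) fun n => ?_
  have hbound : u ^ n / (n ! : ℝ) ≤ exp (2 * u) * (1 / 2) ^ n := by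
    calc u ^ n / (n ! : ℝ) = (2 * u) ^ n / n ! * (1 / 2) ^ n := by
          rw [mul_pow, div_pow, one_pow]
          field_simp
      _ ≤ exp (2 * u) * (1 / 2) ^ n := by
          gcongr
          exact pow_div_factorial_le_exp _ (by positivity) n
  calc R ^ n / (n ! : ℝ) ^ a = (u ^ n / (n ! : ℝ)) ^ a := by
        rw [div_rpow (by positivity) (by positivity), ← rpow_pow_comm hu,
          rpow_inv_rpow hR ha.ne']
    _ ≤ (exp (2 * u) * (1 / 2) ^ n) ^ a := by gcongr
    _ = exp (2 * u) ^ a * ((1 / 2 : ℝ) ^ a) ^ n := by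
        rw [mul_rpow (by positivity) (by positivity), rpow_pow_comm (by norm_num)]

theorem differentiable_tsum_pow_mul {a : ℕ → ℂ}
    (ha : ∀ R : ℝ, 0 ≤ R → Summable fun n => ‖a n‖ * R ^ n) :
    Differentiable ℂ fun z => ∑' n, z ^ n * a n := by
  intro z
  have hz : z ∈ Metric.ball (0 : ℂ) (‖z‖ + 1) := by simp
  refine (Complex.differentiableOn_tsum_of_summable_norm (ha (‖z‖ + 1) (by positivity))
    (fun n => ((differentiable_pow n).mul_const _).differentiableOn) Metric.isOpen_ball
    fun n w hw => ?_).differentiableAt (Metric.isOpen_ball.mem_nhds hz)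
  rw [mem_ball_zero_iff] at hw
  rw [norm_mul, norm_pow, mul_comm]
  gcongr

noncomputable def wrightCoeff (μ : ℝ) (n : ℕ) : ℂ :=
  ((n ! : ℂ) * (Gamma (1 - μ * (n + 1)) : ℂ))⁻¹

theorem norm_wrightCoeff_le {μ : ℝ} (hμ0 : 0 < μ) (hμ1 : μ < 1) (n : ℕ) :
    ‖wrightCoeff μ n‖ ≤ (π * μ)⁻¹ / (n ! : ℝ) ^ (1 - μ) := by
  have hfac : ((n + 1)! : ℝ) = (n + 1) * n ! := by push_cast [Nat.factorial_succ]; rfl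
  have hΓ : Gamma ((n + 1 : ℝ) + 1) = (n + 1)! := by
    exact_mod_cast Gamma_nat_eq_factorial (n + 1)
  have hpos : (0 : ℝ) < (n + 1)! := by positivity
  calc ‖wrightCoeff μ n‖ = (n ! : ℝ)⁻¹ * |(Gamma (1 - μ * (n + 1)))⁻¹| := by
        simp [wrightCoeff, mul_comm]
    _ ≤ (n ! : ℝ)⁻¹ * (Gamma ((n + 1 : ℝ) + 1) ^ μ / (π * μ * (n + 1))) := by
        gcongr
        exact abs_inv_Gamma_one_sub_mul_le hμ0 hμ1 (by positivity)
    _ = (π * μ)⁻¹ / ((n + 1)! : ℝ) ^ (1 - μ) := by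
        rw [hΓ, rpow_sub hpos, rpow_one, hfac]
        field_simp
    _ ≤ (π * μ)⁻¹ / (n ! : ℝ) ^ (1 - μ) := by
        gcongr
        exact n.le_succ

theorem summable_norm_wrightCoeff_mul_pow {μ R : ℝ} (hμ0 : 0 < μ) (hμ1 : μ < 1)
    (hR : 0 ≤ R) :
    Summable fun n => ‖wrightCoeff μ n‖ * R ^ n := by
  refine ((summable_pow_div_factorial_rpow (sub_pos.2 hμ1) hR).mul_left
    (π * μ)⁻¹).of_nonneg_of_le (fun n => by positivity) fun n => ?_
  calc ‖wrightCoeff μ n‖ * R ^ n ≤ (π * μ)⁻¹ / (n ! : ℝ) ^ (1 - μ) * R ^ n := by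
        gcongr
        exact norm_wrightCoeff_le hμ0 hμ1 n
    _ = (π * μ)⁻¹ * (R ^ n / (n ! : ℝ) ^ (1 - μ)) := by ring

/-- For each fixed `0 < μ < 1`, the Wright function is an entire function of `z`. -/
theorem wright_entire (μ : ℝ) (hμ0 : 0 < μ) (hμ1 : μ < 1) :
    Differentiable ℂ (wright μ) :=
  (differentiable_tsum_pow_mul fun _ hR =>
    summable_norm_wrightCoeff_mul_pow hμ0 hμ1 hR).comp differentiable_neg
end

section
/- (Mittag-Leffler form of ψ-Gronwall) Under the hypotheses of the ψ-Gronwall inequality, if additionally v is nondecreasing on [a,b], then u(t) ≤ v(t) · E_α(g(t) Γ(α) (ψ(t)-ψ(a))^α) for all t ∈ [a,b], where E_α(z) = ∑_{k=0}^∞ z^k / Γ(αk+1) is the one-parameter Mittag-Leffler function. -/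
/-!
Freezing the monotone coefficients at `t` turns the hypothesis into
`u ≤ v(t) + g(t) Γ(α) I^α u` on `(a, t]`, where `I^β` is the ψ-Riemann–Liouville integral.
Substituting this bound into itself `n` times, with the semigroup law `I^β I^α = I^(β+α)`
(Fubini on the triangle `a < s < τ < t`, then the substitution `x = ψ(τ)` turns the inner
integral into a Beta integral) and `I^β 1 = (ψ(t) - ψ(a))^β / Γ(β + 1)`, bounds `u(t)` by the
`n`-th partial sum of `v(t) E_α(x)`, `x = g(t) Γ(α) (ψ(t) - ψ(a))^α`, plus a remainder at most
`C x^n / Γ(αn + α)`. By log-convexity, `Γ(y + 1 + α) ≥ y^α Γ(y + 1)`, so the ratio test makes the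
Mittag-Leffler series converge and the remainder tend to `0`.
-/

open Set MeasureTheory Filter Topology Real
open ProbabilityTheory (beta beta_pos)

theorem Real.rpow_mul_Gamma_add_one_le {α y : ℝ} (hα : 0 < α) (hy : 0 < y) :
    y ^ α * Gamma (y + 1) ≤ Gamma (y + 1 + α) := by
  have hslope := convexOn_log_Gamma.slope_mono_adjacent (x := y) (y := y + 1) (z := y + 1 + α)
    hy (by simp only [mem_Ioi]; positivity) (by linarith) (by linarith)
  have hΓ := Gamma_pos_of_pos hy
  simp only [Function.comp, Gamma_add_one hy.ne', log_mul hy.ne' hΓ.ne'] at hslope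
  rw [show y + 1 - y = 1 by ring, show y + 1 + α - (y + 1) = α by ring, div_one,
    le_div_iff₀ hα] at hslope
  rw [← log_le_log_iff (by positivity) (Gamma_pos_of_pos (by positivity)), Gamma_add_one hy.ne',
    log_mul (by positivity) (by positivity), log_mul hy.ne' hΓ.ne', log_rpow hy]
  linarith

theorem summable_pow_div_Gamma {α : ℝ} (hα : 0 < α) (β x : ℝ) :
    Summable fun k : ℕ => x ^ k / Gamma (α * k + β) := by
  have hy : Tendsto (fun k : ℕ => α * k + β - 1) atTop atTop :=
    tendsto_atTop_add_const_right _ _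
      (tendsto_atTop_add_const_right _ _ (tendsto_natCast_atTop_atTop.const_mul_atTop hα))
  refine summable_of_ratio_norm_eventually_le (r := 1 / 2) (by norm_num) ?_
  filter_upwards [hy.eventually_gt_atTop 0,
    ((tendsto_rpow_atTop hα).comp hy).eventually_ge_atTop (2 * |x|)] with k hy hxy
  set y := α * k + β - 1
  replace hxy : 2 * |x| ≤ y ^ α := hxy
  have hΓ := Gamma_pos_of_pos (show 0 < y + 1 by positivity)
  have hΓα : y ^ α * Gamma (y + 1) ≤ Gamma (y + 1 + α) := rpow_mul_Gamma_add_one_le hα hy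
  have hyα : 0 < y ^ α := rpow_pos_of_pos hy α
  have hΓ' : 0 < Gamma (y + 1 + α) := (mul_pos hyα hΓ).trans_le hΓα
  rw [show α * k + β = y + 1 by ring, show α * ((k + 1 : ℕ) : ℝ) + β = y + 1 + α by push_cast; ring,
    norm_div, norm_div, norm_pow, norm_pow, Real.norm_of_nonneg hΓ.le, Real.norm_of_nonneg hΓ'.le,
    pow_succ, Real.norm_eq_abs]
  have hxk : 0 ≤ |x| ^ k := by positivity
  calc |x| ^ k * |x| / Gamma (y + 1 + α) ≤ |x| ^ k * |x| / (y ^ α * Gamma (y + 1)) := by gcongr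
    _ ≤ 1 / 2 * (|x| ^ k / Gamma (y + 1)) := by
      rw [div_le_iff₀ (by positivity)]
      field_simp
      nlinarith [mul_le_mul_of_nonneg_left hxy hxk]

noncomputable def mittagLeffler (α z : ℝ) : ℝ :=
  ∑' k : ℕ, z ^ k / Gamma (α * k + 1)

theorem one_le_mittagLeffler {α z : ℝ} (hα : 0 < α) (hz : 0 ≤ z) : 1 ≤ mittagLeffler α z := by
  have h := (summable_pow_div_Gamma hα 1 z).le_tsum 0 fun k _ =>
    div_nonneg (pow_nonneg hz k) (Gamma_pos_of_pos (by positivity)).le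
  simpa [mittagLeffler, Gamma_one] using h

theorem Complex.betaIntegral_ofReal {p q : ℝ} (hp : 0 < p) (hq : 0 < q) :
    betaIntegral p q = beta p q := by
  rw [betaIntegral_eq_Gamma_mul_div _ _ (by simpa) (by simpa), ← ofReal_add, Gamma_ofReal,
    Gamma_ofReal, Gamma_ofReal, beta]
  push_cast
  rfl

theorem integral_Ioo_sub_rpow_mul_sub_rpow {p q c d : ℝ} (hp : 0 < p) (hq : 0 < q) (hcd : c < d) :
    ∫ x in Ioo c d, (d - x) ^ (p - 1) * (x - c) ^ (q - 1) = beta p q * (d - c) ^ (p + q - 1) := by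
  have hL : 0 < d - c := sub_pos.mpr hcd
  have hscaled := Complex.betaIntegral_scaled q p hL
  rw [Complex.betaIntegral_symm, Complex.betaIntegral_ofReal hp hq] at hscaled
  have hcast : ∀ x ∈ uIcc 0 (d - c), (((d - (x + c)) ^ (p - 1) * (x + c - c) ^ (q - 1) : ℝ) : ℂ) =
      (x : ℂ) ^ ((q : ℂ) - 1) * (((d - c : ℝ) : ℂ) - x) ^ ((p : ℂ) - 1) := by
    intro x hx
    rw [uIcc_of_le hL.le] at hx
    rw [show d - (x + c) = d - c - x by ring, add_sub_cancel_right, mul_comm, Complex.ofReal_mul,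
      Complex.ofReal_cpow hx.1, Complex.ofReal_cpow (by linarith [hx.2])]
    push_cast
    rfl
  rw [← intervalIntegral.integral_congr hcast, intervalIntegral.integral_ofReal,
    intervalIntegral.integral_comp_add_right (fun x => (d - x) ^ (p - 1) * (x - c) ^ (q - 1)),
    zero_add, sub_add_cancel, intervalIntegral.integral_of_le hcd.le, integral_Ioc_eq_integral_Ioo,
    show (q : ℂ) + p - 1 = ((p + q - 1 : ℝ) : ℂ) by push_cast; ring,
    ← Complex.ofReal_cpow hL.le] at hscaled
  rw [mul_comm]
  exact_mod_cast hscaled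

theorem strictMonoOn_Icc_of_hasDerivAt_pos {Φ Φ' : ℝ → ℝ} {a t : ℝ}
    (hΦ : ContinuousOn Φ (Icc a t)) (hΦ' : ∀ x ∈ Ioo a t, HasDerivAt Φ (Φ' x) x)
    (hΦ'_pos : ∀ x ∈ Ioo a t, 0 < Φ' x) : StrictMonoOn Φ (Icc a t) :=
  strictMonoOn_of_deriv_pos (convex_Icc a t) hΦ fun x hx => by
    rw [interior_Icc] at hx
    rw [(hΦ' x hx).deriv]
    exact hΦ'_pos x hx

theorem integral_Ioo_deriv_mul_sub_rpow_mul_sub_rpow {Φ Φ' : ℝ → ℝ} {s t p q : ℝ}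
    (hp : 0 < p) (hq : 0 < q) (hst : s < t) (hΦ : ContinuousOn Φ (Icc s t))
    (hΦ' : ∀ x ∈ Ioo s t, HasDerivAt Φ (Φ' x) x) (hΦ'_pos : ∀ x ∈ Ioo s t, 0 < Φ' x) :
    ∫ τ in Ioo s t, Φ' τ * ((Φ t - Φ τ) ^ (p - 1) * (Φ τ - Φ s) ^ (q - 1)) =
      beta p q * (Φ t - Φ s) ^ (p + q - 1) := by
  have hΦst : Φ s < Φ t := strictMonoOn_Icc_of_hasDerivAt_pos hΦ hΦ' hΦ'_pos
    (left_mem_Icc.mpr hst.le) (right_mem_Icc.mpr hst.le) hst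
  have hsubst := integral_Icc_deriv_smul_of_deriv_nonneg hΦ hΦ' (fun x hx => (hΦ'_pos x hx).le)
    hst.le (g := fun x => (Φ t - x) ^ (p - 1) * (x - Φ s) ^ (q - 1))
  rw [integral_Icc_eq_integral_Ioo, integral_Icc_eq_integral_Ioo,
    integral_Ioo_sub_rpow_mul_sub_rpow hp hq hΦst] at hsubst
  exact hsubst

theorem integrableOn_Ioo_deriv_mul_sub_rpow_mul_sub_rpow {Φ Φ' : ℝ → ℝ} {s t p q : ℝ}
    (hp : 0 < p) (hq : 0 < q) (hst : s < t) (hΦ : ContinuousOn Φ (Icc s t))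
    (hΦ' : ∀ x ∈ Ioo s t, HasDerivAt Φ (Φ' x) x) (hΦ'_pos : ∀ x ∈ Ioo s t, 0 < Φ' x) :
    IntegrableOn (fun τ => Φ' τ * ((Φ t - Φ τ) ^ (p - 1) * (Φ τ - Φ s) ^ (q - 1))) (Ioo s t) := by
  have hΦst : Φ s < Φ t := strictMonoOn_Icc_of_hasDerivAt_pos hΦ hΦ' hΦ'_pos
    (left_mem_Icc.mpr hst.le) (right_mem_Icc.mpr hst.le) hst
  refine Integrable.of_integral_ne_zero ?_
  rw [integral_Ioo_deriv_mul_sub_rpow_mul_sub_rpow hp hq hst hΦ hΦ' hΦ'_pos]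
  exact (mul_pos (beta_pos hp hq) (rpow_pos_of_pos (sub_pos.mpr hΦst) _)).ne'

theorem Real.rpow_sub_one_le_rpow_mul_rpow_sub_one {x D β γ : ℝ} (hx : 0 < x) (hxD : x ≤ D)
    (hβγ : β ≤ γ) : x ^ (γ - 1) ≤ D ^ (γ - β) * x ^ (β - 1) := by
  rw [show γ - 1 = (γ - β) + (β - 1) by ring, rpow_add hx]
  gcongr

def triangle (a t : ℝ) : Set (ℝ × ℝ) := {z | z.2 < z.1} ∩ Ioo a t ×ˢ Ioo a t

theorem measurableSet_triangle (a t : ℝ) : MeasurableSet (triangle a t) :=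
  (measurableSet_lt measurable_snd measurable_fst).inter (measurableSet_Ioo.prod measurableSet_Ioo)

section Triangle

variable {E : Type*} [NormedAddCommGroup E] {a t : ℝ}

theorem triangle_indicator_eq_Ioo_indicator_fst (K : ℝ → ℝ → E) (τ s : ℝ) :
    (triangle a t).indicator (Function.uncurry K) (τ, s) =
      (Ioo a t).indicator (fun τ => (Ioo a τ).indicator (K τ) s) τ := by
  simp only [indicator, triangle, mem_inter_iff, mem_prod, mem_Ioo, mem_ofPred_eq,
    Function.uncurry_apply_pair]
  split_ifs <;> grind

theorem triangle_indicator_eq_Ioo_indicator_snd (K : ℝ → ℝ → E) (τ s : ℝ) :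
    (triangle a t).indicator (Function.uncurry K) (τ, s) =
      (Ioo a t).indicator (fun s => (Ioo s t).indicator (K · s) τ) s := by
  simp only [indicator, triangle, mem_inter_iff, mem_prod, mem_Ioo, mem_ofPred_eq,
    Function.uncurry_apply_pair]
  split_ifs <;> grind

theorem integral_triangle_indicator_fst [NormedSpace ℝ E] (K : ℝ → ℝ → E) (τ : ℝ) :
    ∫ s, (triangle a t).indicator (Function.uncurry K) (τ, s) =
      (Ioo a t).indicator (fun τ => ∫ s in Ioo a τ, K τ s) τ := by
  simp_rw [triangle_indicator_eq_Ioo_indicator_fst]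
  by_cases hτ : τ ∈ Ioo a t
  · simp only [indicator_of_mem hτ, integral_indicator measurableSet_Ioo]
  · simp only [indicator_of_notMem hτ, integral_zero]

theorem integral_triangle_indicator_snd [NormedSpace ℝ E] (K : ℝ → ℝ → E) (s : ℝ) :
    ∫ τ, (triangle a t).indicator (Function.uncurry K) (τ, s) =
      (Ioo a t).indicator (fun s => ∫ τ in Ioo s t, K τ s) s := by
  simp_rw [triangle_indicator_eq_Ioo_indicator_snd]
  by_cases hs : s ∈ Ioo a t
  · simp only [indicator_of_mem hs, integral_indicator measurableSet_Ioo]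
  · simp only [indicator_of_notMem hs, integral_zero]

theorem integrable_triangle_indicator {K : ℝ → ℝ → E}
    (hK : AEStronglyMeasurable (Function.uncurry K)
      ((volume.restrict (Ioo a t)).prod (volume.restrict (Ioo a t))))
    (hK_sect : ∀ s ∈ Ioo a t, IntegrableOn (K · s) (Ioo s t))
    (hK_norm : IntegrableOn (fun s => ∫ τ in Ioo s t, ‖K τ s‖) (Ioo a t)) :
    Integrable ((triangle a t).indicator (Function.uncurry K)) (volume.prod volume) := by
  have hmeas : AEStronglyMeasurable ((triangle a t).indicator (Function.uncurry K))
      (volume.prod volume) := by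
    rw [aestronglyMeasurable_indicator_iff (measurableSet_triangle a t)]
    refine hK.mono_measure ?_
    rw [Measure.prod_restrict]
    exact Measure.restrict_mono inter_subset_right le_rfl
  refine (integrable_prod_iff' hmeas).mpr ⟨Eventually.of_forall fun s => ?_, ?_⟩
  · simp_rw [triangle_indicator_eq_Ioo_indicator_snd]
    by_cases hs : s ∈ Ioo a t
    · simp only [indicator_of_mem hs]
      exact (integrable_indicator_iff measurableSet_Ioo).mpr (hK_sect s hs)
    · simp only [indicator_of_notMem hs]
      exact integrable_zero _ _ _
  · refine ((integrable_indicator_iff measurableSet_Ioo).mpr hK_norm).congr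
      (Eventually.of_forall fun s => ?_)
    rw [← integral_triangle_indicator_snd (fun τ s => ‖K τ s‖)]
    simp_rw [norm_indicator_eq_indicator_norm]
    rfl

theorem integral_Ioo_integral_Ioo_swap [NormedSpace ℝ E] {K : ℝ → ℝ → E}
    (hK : Integrable ((triangle a t).indicator (Function.uncurry K)) (volume.prod volume)) :
    ∫ τ in Ioo a t, ∫ s in Ioo a τ, K τ s = ∫ s in Ioo a t, ∫ τ in Ioo s t, K τ s := by
  calc ∫ τ in Ioo a t, ∫ s in Ioo a τ, K τ s
      = ∫ τ, ∫ s, (triangle a t).indicator (Function.uncurry K) (τ, s) := by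
        simp_rw [integral_triangle_indicator_fst, integral_indicator measurableSet_Ioo]
    _ = ∫ s, ∫ τ, (triangle a t).indicator (Function.uncurry K) (τ, s) :=
        integral_integral_swap hK
    _ = ∫ s in Ioo a t, ∫ τ in Ioo s t, K τ s := by
        simp_rw [integral_triangle_indicator_snd, integral_indicator measurableSet_Ioo]

theorem integrableOn_Ioo_integral_Ioo [NormedSpace ℝ E] {K : ℝ → ℝ → E}
    (hK : Integrable ((triangle a t).indicator (Function.uncurry K)) (volume.prod volume)) :
    IntegrableOn (fun τ => ∫ s in Ioo a τ, K τ s) (Ioo a t) := by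
  rw [← integrable_indicator_iff measurableSet_Ioo]
  simpa only [integral_triangle_indicator_fst] using hK.integral_prod_left

end Triangle

noncomputable def psiIntegrand (Φ Φ' : ℝ → ℝ) (β : ℝ) (f : ℝ → ℝ) (t τ : ℝ) : ℝ :=
  Φ' τ * (Φ t - Φ τ) ^ (β - 1) * f τ

/-- The ψ-Riemann–Liouville integral `I^{β;ψ}_{a+} f (t)`, with `Φ = ψ` and `Φ' = ψ'`. -/
noncomputable def psiFracIntegral (Φ Φ' : ℝ → ℝ) (a β : ℝ) (f : ℝ → ℝ) (t : ℝ) : ℝ :=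
  (Gamma β)⁻¹ * ∫ τ in Ioo a t, psiIntegrand Φ Φ' β f t τ

section PsiFracIntegral

variable {Φ Φ' f : ℝ → ℝ} {a t : ℝ}

theorem aestronglyMeasurable_restrict_of_hasDerivAt
    (hΦ' : ∀ x ∈ Ioo a t, HasDerivAt Φ (Φ' x) x) :
    AEStronglyMeasurable Φ' (volume.restrict (Ioo a t)) :=
  (measurable_deriv Φ).aestronglyMeasurable.congr
    (ae_restrict_of_forall_mem measurableSet_Ioo fun x hx => (hΦ' x hx).deriv)

theorem psiIntegrand_nonneg (β : ℝ) (hΦ : MonotoneOn Φ (Icc a t))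
    (hΦ'_nonneg : ∀ x ∈ Ioo a t, 0 ≤ Φ' x) (hf : ∀ x ∈ Ioo a t, 0 ≤ f x) {τ : ℝ}
    (hτ : τ ∈ Ioo a t) : 0 ≤ psiIntegrand Φ Φ' β f t τ := by
  have := sub_nonneg.mpr (hΦ (Ioo_subset_Icc_self hτ) (right_mem_Icc.mpr (hτ.1.trans hτ.2).le)
    hτ.2.le)
  have := hΦ'_nonneg τ hτ
  have := hf τ hτ
  unfold psiIntegrand
  positivity

theorem psiFracIntegral_nonneg {β : ℝ} (hβ : 0 < β) (hΦ : MonotoneOn Φ (Icc a t))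
    (hΦ'_nonneg : ∀ x ∈ Ioo a t, 0 ≤ Φ' x) (hf : ∀ x ∈ Ioo a t, 0 ≤ f x) :
    0 ≤ psiFracIntegral Φ Φ' a β f t :=
  mul_nonneg (inv_nonneg.mpr (Gamma_pos_of_pos hβ).le)
    (setIntegral_nonneg measurableSet_Ioo fun _ hτ => psiIntegrand_nonneg β hΦ hΦ'_nonneg hf hτ)

theorem intervalIntegral_eq_Gamma_mul_psiFracIntegral {α : ℝ} (hα : 0 < α) (hat : a ≤ t) :
    ∫ τ in a..t, Φ' τ * (Φ t - Φ τ) ^ (α - 1) * f τ = Gamma α * psiFracIntegral Φ Φ' a α f t := by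
  rw [psiFracIntegral, ← mul_assoc, mul_inv_cancel₀ (Gamma_pos_of_pos hα).ne', one_mul,
    intervalIntegral.integral_of_le hat, integral_Ioc_eq_integral_Ioo]
  rfl

theorem psiFracIntegral_one {β : ℝ} (hβ : 0 < β) (hat : a < t) (hΦ : ContinuousOn Φ (Icc a t))
    (hΦ' : ∀ x ∈ Ioo a t, HasDerivAt Φ (Φ' x) x) (hΦ'_pos : ∀ x ∈ Ioo a t, 0 < Φ' x) :
    IntegrableOn (psiIntegrand Φ Φ' β (fun _ => 1) t) (Ioo a t) ∧
      psiFracIntegral Φ Φ' a β (fun _ => 1) t = (Φ t - Φ a) ^ β / Gamma (β + 1) := by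
  have hint := integrableOn_Ioo_deriv_mul_sub_rpow_mul_sub_rpow hβ one_pos hat hΦ hΦ' hΦ'_pos
  have hval := integral_Ioo_deriv_mul_sub_rpow_mul_sub_rpow hβ one_pos hat hΦ hΦ' hΦ'_pos
  simp only [sub_self, rpow_zero, mul_one, add_sub_cancel_right] at hint hval
  have hkernel : psiIntegrand Φ Φ' β (fun _ => 1) t = fun τ => Φ' τ * (Φ t - Φ τ) ^ (β - 1) := by
    funext τ
    exact mul_one _
  rw [psiFracIntegral, hkernel, hval, beta, Gamma_one, mul_one]
  refine ⟨hint, ?_⟩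
  field_simp [(Gamma_pos_of_pos hβ).ne']

theorem psiIntegrand_le_of_le {β γ : ℝ} (hβγ : β ≤ γ) (hΦ : StrictMonoOn Φ (Icc a t))
    (hΦ'_nonneg : ∀ x ∈ Ioo a t, 0 ≤ Φ' x) (hf : ∀ x ∈ Ioo a t, 0 ≤ f x) {τ : ℝ}
    (hτ : τ ∈ Ioo a t) :
    psiIntegrand Φ Φ' γ f t τ ≤ (Φ t - Φ a) ^ (γ - β) * psiIntegrand Φ Φ' β f t τ := by
  have hat : a ≤ t := (hτ.1.trans hτ.2).le
  have hτt : 0 < Φ t - Φ τ :=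
    sub_pos.mpr (hΦ (Ioo_subset_Icc_self hτ) (right_mem_Icc.mpr hat) hτ.2)
  have hτa : Φ t - Φ τ ≤ Φ t - Φ a :=
    sub_le_sub_left (hΦ.monotoneOn (left_mem_Icc.mpr hat) (Ioo_subset_Icc_self hτ) hτ.1.le) _
  have hkernel := rpow_sub_one_le_rpow_mul_rpow_sub_one hτt hτa hβγ
  have := hΦ'_nonneg τ hτ
  have := hf τ hτ
  calc psiIntegrand Φ Φ' γ f t τ
      ≤ Φ' τ * ((Φ t - Φ a) ^ (γ - β) * (Φ t - Φ τ) ^ (β - 1)) * f τ := by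
        unfold psiIntegrand; gcongr
    _ = (Φ t - Φ a) ^ (γ - β) * psiIntegrand Φ Φ' β f t τ := by unfold psiIntegrand; ring

theorem integrableOn_psiIntegrand_of_le {β γ : ℝ} (hβγ : β ≤ γ) (hΦ : ContinuousOn Φ (Icc a t))
    (hΦ' : ∀ x ∈ Ioo a t, HasDerivAt Φ (Φ' x) x) (hΦ'_pos : ∀ x ∈ Ioo a t, 0 < Φ' x)
    (hf : AEStronglyMeasurable f (volume.restrict (Ioo a t))) (hf_nonneg : ∀ x ∈ Ioo a t, 0 ≤ f x)
    (hint : IntegrableOn (psiIntegrand Φ Φ' β f t) (Ioo a t)) :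
    IntegrableOn (psiIntegrand Φ Φ' γ f t) (Ioo a t) := by
  have hmono := strictMonoOn_Icc_of_hasDerivAt_pos hΦ hΦ' hΦ'_pos
  have hΦm : AEStronglyMeasurable Φ (volume.restrict (Ioo a t)) :=
    (hΦ.mono Ioo_subset_Icc_self).aestronglyMeasurable measurableSet_Ioo
  refine (hint.const_mul ((Φ t - Φ a) ^ (γ - β))).mono' ?_ ?_
  · exact ((aestronglyMeasurable_restrict_of_hasDerivAt hΦ').mul
      ((aestronglyMeasurable_const.sub hΦm).aemeasurable.pow_const _).aestronglyMeasurable).mul hf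
  · filter_upwards [ae_restrict_mem measurableSet_Ioo] with τ hτ
    have hΦ'_nonneg : ∀ x ∈ Ioo a t, 0 ≤ Φ' x := fun x hx => (hΦ'_pos x hx).le
    exact (Real.norm_of_nonneg (psiIntegrand_nonneg γ hmono.monotoneOn hΦ'_nonneg hf_nonneg hτ)
      ).trans_le (psiIntegrand_le_of_le hβγ hmono hΦ'_nonneg hf_nonneg hτ)

theorem integral_psiIntegrand_le_of_le {β γ : ℝ} (hβγ : β ≤ γ) (hΦ : ContinuousOn Φ (Icc a t))
    (hΦ' : ∀ x ∈ Ioo a t, HasDerivAt Φ (Φ' x) x) (hΦ'_pos : ∀ x ∈ Ioo a t, 0 < Φ' x)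
    (hf : AEStronglyMeasurable f (volume.restrict (Ioo a t))) (hf_nonneg : ∀ x ∈ Ioo a t, 0 ≤ f x)
    (hint : IntegrableOn (psiIntegrand Φ Φ' β f t) (Ioo a t)) :
    ∫ τ in Ioo a t, psiIntegrand Φ Φ' γ f t τ ≤
      (Φ t - Φ a) ^ (γ - β) * ∫ τ in Ioo a t, psiIntegrand Φ Φ' β f t τ := by
  rw [← integral_const_mul]
  exact setIntegral_mono_on
    (integrableOn_psiIntegrand_of_le hβγ hΦ hΦ' hΦ'_pos hf hf_nonneg hint)
    (hint.const_mul _) measurableSet_Ioo fun τ hτ =>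
      psiIntegrand_le_of_le hβγ (strictMonoOn_Icc_of_hasDerivAt_pos hΦ hΦ' hΦ'_pos)
        (fun x hx => (hΦ'_pos x hx).le) hf_nonneg hτ

theorem integral_Ioo_mul_psiIntegrand {α β s : ℝ} (hα : 0 < α) (hβ : 0 < β) (hst : s < t)
    (hΦ : ContinuousOn Φ (Icc s t)) (hΦ' : ∀ x ∈ Ioo s t, HasDerivAt Φ (Φ' x) x)
    (hΦ'_pos : ∀ x ∈ Ioo s t, 0 < Φ' x) :
    IntegrableOn (fun τ => Φ' τ * (Φ t - Φ τ) ^ (β - 1) * psiIntegrand Φ Φ' α f τ s) (Ioo s t) ∧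
      ∫ τ in Ioo s t, Φ' τ * (Φ t - Φ τ) ^ (β - 1) * psiIntegrand Φ Φ' α f τ s =
        beta β α * psiIntegrand Φ Φ' (β + α) f t s := by
  have hsplit : (fun τ => Φ' τ * (Φ t - Φ τ) ^ (β - 1) * psiIntegrand Φ Φ' α f τ s) = fun τ =>
      Φ' τ * ((Φ t - Φ τ) ^ (β - 1) * (Φ τ - Φ s) ^ (α - 1)) * (Φ' s * f s) := by
    funext τ
    unfold psiIntegrand
    ring
  rw [hsplit, integral_mul_const,
    integral_Ioo_deriv_mul_sub_rpow_mul_sub_rpow hβ hα hst hΦ hΦ' hΦ'_pos]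
  refine ⟨(integrableOn_Ioo_deriv_mul_sub_rpow_mul_sub_rpow hβ hα hst hΦ hΦ' hΦ'_pos).mul_const _,
    ?_⟩
  unfold psiIntegrand
  ring

theorem aestronglyMeasurable_uncurry_mul_psiIntegrand {α β : ℝ} (hΦ : ContinuousOn Φ (Icc a t))
    (hΦ' : ∀ x ∈ Ioo a t, HasDerivAt Φ (Φ' x) x)
    (hf : AEStronglyMeasurable f (volume.restrict (Ioo a t))) :
    AEStronglyMeasurable
      (Function.uncurry fun τ s => Φ' τ * (Φ t - Φ τ) ^ (β - 1) * psiIntegrand Φ Φ' α f τ s)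
      ((volume.restrict (Ioo a t)).prod (volume.restrict (Ioo a t))) := by
  have hΦm : AEStronglyMeasurable Φ (volume.restrict (Ioo a t)) :=
    (hΦ.mono Ioo_subset_Icc_self).aestronglyMeasurable measurableSet_Ioo
  have hΦ'm := aestronglyMeasurable_restrict_of_hasDerivAt hΦ'
  exact (hΦ'm.comp_fst.mul ((aestronglyMeasurable_const.sub hΦm.comp_fst).aemeasurable.pow_const
    _).aestronglyMeasurable).mul ((hΦ'm.comp_snd.mul ((hΦm.comp_fst.sub
      hΦm.comp_snd).aemeasurable.pow_const _).aestronglyMeasurable).mul hf.comp_snd)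

theorem psiFracIntegral_psiFracIntegral {α β : ℝ} (hα : 0 < α) (hβ : 0 < β)
    (hΦ : ContinuousOn Φ (Icc a t)) (hΦ' : ∀ x ∈ Ioo a t, HasDerivAt Φ (Φ' x) x)
    (hΦ'_pos : ∀ x ∈ Ioo a t, 0 < Φ' x)
    (hf : AEStronglyMeasurable f (volume.restrict (Ioo a t))) (hf_nonneg : ∀ x ∈ Ioo a t, 0 ≤ f x)
    (hint : IntegrableOn (psiIntegrand Φ Φ' (β + α) f t) (Ioo a t)) :
    IntegrableOn (psiIntegrand Φ Φ' β (psiFracIntegral Φ Φ' a α f) t) (Ioo a t) ∧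
      psiFracIntegral Φ Φ' a β (psiFracIntegral Φ Φ' a α f) t =
        psiFracIntegral Φ Φ' a (β + α) f t := by
  set K : ℝ → ℝ → ℝ := fun τ s => Φ' τ * (Φ t - Φ τ) ^ (β - 1) * psiIntegrand Φ Φ' α f τ s
  have hmono := (strictMonoOn_Icc_of_hasDerivAt_pos hΦ hΦ' hΦ'_pos).monotoneOn
  have hK_sect : ∀ s ∈ Ioo a t, IntegrableOn (K · s) (Ioo s t) ∧
      ∫ τ in Ioo s t, K τ s = beta β α * psiIntegrand Φ Φ' (β + α) f t s := fun s hs =>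
    integral_Ioo_mul_psiIntegrand hα hβ hs.2 (hΦ.mono (Icc_subset_Icc_left hs.1.le))
      (fun x hx => hΦ' x ⟨hs.1.trans hx.1, hx.2⟩) (fun x hx => hΦ'_pos x ⟨hs.1.trans hx.1, hx.2⟩)
  have hK_nonneg : ∀ s ∈ Ioo a t, ∀ τ ∈ Ioo s t, 0 ≤ K τ s := by
    intro s hs τ hτ
    have hτ' : τ ∈ Ioo a t := ⟨hs.1.trans hτ.1, hτ.2⟩
    have hΦ'_nonneg : ∀ x ∈ Ioo a t, 0 ≤ Φ' x := fun x hx => (hΦ'_pos x hx).le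
    have hkernel := psiIntegrand_nonneg β hmono hΦ'_nonneg (fun _ _ => zero_le_one) hτ'
    rw [psiIntegrand, mul_one] at hkernel
    exact mul_nonneg hkernel (psiIntegrand_nonneg α (hmono.mono (Icc_subset_Icc_right hτ'.2.le))
      (fun x hx => hΦ'_nonneg x ⟨hx.1, hx.2.trans hτ.2⟩)
      (fun x hx => hf_nonneg x ⟨hx.1, hx.2.trans hτ.2⟩) ⟨hs.1, hτ.1⟩)
  have hK_norm : IntegrableOn (fun s => ∫ τ in Ioo s t, ‖K τ s‖) (Ioo a t) := by
    refine IntegrableOn.congr_fun (hint.const_mul (beta β α)) (fun s hs => ?_) measurableSet_Ioo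
    rw [← (hK_sect s hs).2]
    exact setIntegral_congr_fun measurableSet_Ioo fun τ hτ =>
      (Real.norm_of_nonneg (hK_nonneg s hs τ hτ)).symm
  have hK := integrable_triangle_indicator (aestronglyMeasurable_uncurry_mul_psiIntegrand hΦ hΦ' hf)
    (fun s hs => (hK_sect s hs).1) hK_norm
  have hinner : psiIntegrand Φ Φ' β (psiFracIntegral Φ Φ' a α f) t =
      fun τ => (Gamma α)⁻¹ * ∫ s in Ioo a τ, K τ s := by
    funext τ
    simp only [psiIntegrand, psiFracIntegral, K, integral_const_mul]
    ring
  refine ⟨hinner ▸ (integrableOn_Ioo_integral_Ioo hK).const_mul _, ?_⟩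
  calc psiFracIntegral Φ Φ' a β (psiFracIntegral Φ Φ' a α f) t
      = (Gamma β)⁻¹ * ((Gamma α)⁻¹ * ∫ s in Ioo a t, ∫ τ in Ioo s t, K τ s) := by
        rw [psiFracIntegral, hinner, integral_const_mul, integral_Ioo_integral_Ioo_swap hK]
    _ = (Gamma β)⁻¹ * ((Gamma α)⁻¹ *
          (beta β α * ∫ s in Ioo a t, psiIntegrand Φ Φ' (β + α) f t s)) := by
        rw [setIntegral_congr_fun measurableSet_Ioo fun s hs => (hK_sect s hs).2,
          integral_const_mul]
    _ = psiFracIntegral Φ Φ' a (β + α) f t := by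
        rw [psiFracIntegral, beta]
        field_simp [(Gamma_pos_of_pos hα).ne', (Gamma_pos_of_pos hβ).ne']

end PsiFracIntegral

section Gronwall

variable {Φ Φ' u : ℝ → ℝ} {a t α c K : ℝ}

theorem psiFracIntegral_le_of_le_const_add_psiFracIntegral {β : ℝ} (hα : 0 < α) (hβ : 0 < β)
    (hat : a < t) (hΦ : ContinuousOn Φ (Icc a t)) (hΦ' : ∀ x ∈ Ioo a t, HasDerivAt Φ (Φ' x) x)
    (hΦ'_pos : ∀ x ∈ Ioo a t, 0 < Φ' x)
    (hu : AEStronglyMeasurable u (volume.restrict (Ioo a t))) (hu_nonneg : ∀ x ∈ Ioo a t, 0 ≤ u x)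
    (hle : ∀ τ ∈ Ioo a t, u τ ≤ c + K * psiFracIntegral Φ Φ' a α u τ)
    (hint : IntegrableOn (psiIntegrand Φ Φ' β u t) (Ioo a t))
    (hint' : IntegrableOn (psiIntegrand Φ Φ' (β + α) u t) (Ioo a t)) :
    psiFracIntegral Φ Φ' a β u t ≤
      c * ((Φ t - Φ a) ^ β / Gamma (β + 1)) + K * psiFracIntegral Φ Φ' a (β + α) u t := by
  obtain ⟨hkernel, hone⟩ := psiFracIntegral_one hβ hat hΦ hΦ' hΦ'_pos
  obtain ⟨hiter, hsemigroup⟩ :=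
    psiFracIntegral_psiFracIntegral hα hβ hΦ hΦ' hΦ'_pos hu hu_nonneg hint'
  have hmono := (strictMonoOn_Icc_of_hasDerivAt_pos hΦ hΦ' hΦ'_pos).monotoneOn
  have hpointwise : ∀ τ ∈ Ioo a t, psiIntegrand Φ Φ' β u t τ ≤
      c * psiIntegrand Φ Φ' β (fun _ => 1) t τ +
        K * psiIntegrand Φ Φ' β (psiFracIntegral Φ Φ' a α u) t τ := by
    intro τ hτ
    have hk := psiIntegrand_nonneg β hmono (fun x hx => (hΦ'_pos x hx).le)
      (fun _ _ => zero_le_one) hτ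
    calc psiIntegrand Φ Φ' β u t τ = psiIntegrand Φ Φ' β (fun _ => 1) t τ * u τ := by
          simp only [psiIntegrand, mul_one]
      _ ≤ psiIntegrand Φ Φ' β (fun _ => 1) t τ * (c + K * psiFracIntegral Φ Φ' a α u τ) :=
          mul_le_mul_of_nonneg_left (hle τ hτ) hk
      _ = _ := by simp only [psiIntegrand]; ring
  have hintegral := setIntegral_mono_on hint ((hkernel.const_mul c).add (hiter.const_mul K))
    measurableSet_Ioo hpointwise
  simp only [Pi.add_apply] at hintegral
  rw [integral_add (hkernel.const_mul c) (hiter.const_mul K), integral_const_mul,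
    integral_const_mul] at hintegral
  calc psiFracIntegral Φ Φ' a β u t
      ≤ (Gamma β)⁻¹ * (c * (∫ τ in Ioo a t, psiIntegrand Φ Φ' β (fun _ => 1) t τ) +
          K * ∫ τ in Ioo a t, psiIntegrand Φ Φ' β (psiFracIntegral Φ Φ' a α u) t τ) :=
        mul_le_mul_of_nonneg_left hintegral (inv_nonneg.mpr (Gamma_pos_of_pos hβ).le)
    _ = c * psiFracIntegral Φ Φ' a β (fun _ => 1) t +
        K * psiFracIntegral Φ Φ' a β (psiFracIntegral Φ Φ' a α u) t := by
      simp only [psiFracIntegral]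
      ring
    _ = _ := by rw [hone, hsemigroup]

theorem le_sum_add_psiFracIntegral_of_le_const_add_psiFracIntegral (hα : 0 < α) (hK : 0 ≤ K)
    (hat : a < t) (hΦ : ContinuousOn Φ (Icc a t)) (hΦ' : ∀ x ∈ Ioo a t, HasDerivAt Φ (Φ' x) x)
    (hΦ'_pos : ∀ x ∈ Ioo a t, 0 < Φ' x)
    (hu : AEStronglyMeasurable u (volume.restrict (Ioo a t))) (hu_nonneg : ∀ x ∈ Ioo a t, 0 ≤ u x)
    (hle : ∀ τ ∈ Ioc a t, u τ ≤ c + K * psiFracIntegral Φ Φ' a α u τ)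
    (hint : IntegrableOn (psiIntegrand Φ Φ' α u t) (Ioo a t)) (n : ℕ) :
    u t ≤ c * ∑ k ∈ Finset.range (n + 1), (K * (Φ t - Φ a) ^ α) ^ k / Gamma (α * k + 1) +
      K ^ (n + 1) * psiFracIntegral Φ Φ' a (α * (n + 1)) u t := by
  have hint_mul : ∀ m : ℕ, IntegrableOn (psiIntegrand Φ Φ' (α * (m + 1)) u t) (Ioo a t) :=
    fun m => integrableOn_psiIntegrand_of_le (by nlinarith [m.cast_nonneg (α := ℝ)]) hΦ hΦ'
      hΦ'_pos hu hu_nonneg hint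
  have hD : 0 ≤ Φ t - Φ a := sub_nonneg.mpr ((strictMonoOn_Icc_of_hasDerivAt_pos hΦ hΦ'
    hΦ'_pos).monotoneOn (left_mem_Icc.mpr hat.le) (right_mem_Icc.mpr hat.le) hat.le)
  induction n with
  | zero => simpa [Gamma_one] using hle t (right_mem_Ioc.mpr hat)
  | succ n ih =>
    have hsucc : α * ((n + 1 : ℕ) + 1 : ℝ) = α * (n + 1) + α := by push_cast; ring
    have hstep := psiFracIntegral_le_of_le_const_add_psiFracIntegral hα (by positivity) hat hΦ hΦ'
      hΦ'_pos hu hu_nonneg (fun τ hτ => hle τ (Ioo_subset_Ioc_self hτ)) (hint_mul n)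
      (hsucc ▸ hint_mul (n + 1))
    have hpow : (K * (Φ t - Φ a) ^ α) ^ (n + 1) = K ^ (n + 1) * (Φ t - Φ a) ^ (α * (n + 1)) := by
      rw [mul_pow, ← rpow_natCast ((Φ t - Φ a) ^ α), ← rpow_mul hD, Nat.cast_succ]
    calc u t ≤ _ := ih
      _ ≤ c * ∑ k ∈ Finset.range (n + 1), (K * (Φ t - Φ a) ^ α) ^ k / Gamma (α * k + 1) +
          K ^ (n + 1) * (c * ((Φ t - Φ a) ^ (α * (n + 1)) / Gamma (α * (n + 1) + 1)) +
            K * psiFracIntegral Φ Φ' a (α * (n + 1) + α) u t) := by gcongr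
      _ = _ := by
        rw [Finset.sum_range_succ _ (n + 1), hpow, hsucc]
        push_cast
        ring

theorem tendsto_pow_mul_psiFracIntegral_mul_nat (hα : 0 < α) (hK : 0 ≤ K) (hat : a < t)
    (hΦ : ContinuousOn Φ (Icc a t)) (hΦ' : ∀ x ∈ Ioo a t, HasDerivAt Φ (Φ' x) x)
    (hΦ'_pos : ∀ x ∈ Ioo a t, 0 < Φ' x)
    (hu : AEStronglyMeasurable u (volume.restrict (Ioo a t))) (hu_nonneg : ∀ x ∈ Ioo a t, 0 ≤ u x)
    (hint : IntegrableOn (psiIntegrand Φ Φ' α u t) (Ioo a t)) :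
    Tendsto (fun n : ℕ => K ^ (n + 1) * psiFracIntegral Φ Φ' a (α * (n + 1)) u t) atTop (𝓝 0) := by
  set D := Φ t - Φ a
  set J := ∫ τ in Ioo a t, psiIntegrand Φ Φ' α u t τ
  have hmono := (strictMonoOn_Icc_of_hasDerivAt_pos hΦ hΦ' hΦ'_pos).monotoneOn
  have hD : 0 ≤ D := sub_nonneg.mpr (hmono (left_mem_Icc.mpr hat.le) (right_mem_Icc.mpr hat.le)
    hat.le)
  have hbound : ∀ n : ℕ, K ^ (n + 1) * psiFracIntegral Φ Φ' a (α * (n + 1)) u t ≤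
      (K * D ^ α) ^ n / Gamma (α * n + α) * (K * J) := by
    intro n
    have hle := integral_psiIntegrand_le_of_le (γ := α * (n + 1))
      (by nlinarith [n.cast_nonneg (α := ℝ)]) hΦ hΦ' hΦ'_pos hu hu_nonneg hint
    rw [show α * ((n : ℝ) + 1) = α * n + α by ring, add_sub_cancel_right, rpow_mul hD,
      rpow_natCast] at hle
    calc K ^ (n + 1) * psiFracIntegral Φ Φ' a (α * (n + 1)) u t
        ≤ K ^ (n + 1) * ((Gamma (α * n + α))⁻¹ * ((D ^ α) ^ n * J)) := by
          rw [psiFracIntegral, show α * ((n : ℝ) + 1) = α * n + α by ring]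
          exact mul_le_mul_of_nonneg_left (mul_le_mul_of_nonneg_left hle
            (inv_nonneg.mpr (Gamma_pos_of_pos (by positivity)).le)) (pow_nonneg hK _)
      _ = (K * D ^ α) ^ n / Gamma (α * n + α) * (K * J) := by ring
  have hlim := ((summable_pow_div_Gamma hα α (K * D ^ α)).tendsto_atTop_zero).mul_const (K * J)
  rw [zero_mul] at hlim
  refine squeeze_zero (fun n => mul_nonneg (pow_nonneg hK _) ?_) hbound hlim
  exact psiFracIntegral_nonneg (by positivity) hmono (fun x hx => (hΦ'_pos x hx).le) hu_nonneg

theorem le_mul_mittagLeffler_of_le_const_add_psiFracIntegral (hα : 0 < α) (hK : 0 ≤ K) (hat : a < t)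
    (hΦ : ContinuousOn Φ (Icc a t)) (hΦ' : ∀ x ∈ Ioo a t, HasDerivAt Φ (Φ' x) x)
    (hΦ'_pos : ∀ x ∈ Ioo a t, 0 < Φ' x)
    (hu : AEStronglyMeasurable u (volume.restrict (Ioo a t))) (hu_nonneg : ∀ x ∈ Ioo a t, 0 ≤ u x)
    (hle : ∀ τ ∈ Ioc a t, u τ ≤ c + K * psiFracIntegral Φ Φ' a α u τ)
    (hint : IntegrableOn (psiIntegrand Φ Φ' α u t) (Ioo a t)) :
    u t ≤ c * mittagLeffler α (K * (Φ t - Φ a) ^ α) := by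
  have hsum := ((summable_pow_div_Gamma hα 1 (K * (Φ t - Φ a) ^ α)).hasSum.tendsto_sum_nat.comp
    (tendsto_add_atTop_nat 1)).const_mul c
  have hrem := tendsto_pow_mul_psiFracIntegral_mul_nat hα hK hat hΦ hΦ' hΦ'_pos hu hu_nonneg hint
  have hlim := hsum.add hrem
  rw [add_zero] at hlim
  exact ge_of_tendsto' hlim (le_sum_add_psiFracIntegral_of_le_const_add_psiFracIntegral hα hK hat hΦ
    hΦ' hΦ'_pos hu hu_nonneg hle hint)

theorem le_mul_mittagLeffler_of_le_add_psiFracIntegral {v g : ℝ → ℝ} (hα : 0 < α)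
    (hat : a < t) (hΦ : ContinuousOn Φ (Icc a t)) (hΦ' : ∀ x ∈ Ioo a t, HasDerivAt Φ (Φ' x) x)
    (hΦ'_pos : ∀ x ∈ Ioo a t, 0 < Φ' x)
    (hu : AEStronglyMeasurable u (volume.restrict (Ioo a t))) (hu_nonneg : ∀ x ∈ Ioo a t, 0 ≤ u x)
    (hv : ∀ τ ∈ Ioc a t, v τ ≤ v t) (hg : ∀ τ ∈ Ioc a t, g τ ≤ g t) (hg_nonneg : 0 ≤ g t)
    (hle : ∀ τ ∈ Ioc a t, u τ ≤ v τ + g τ * Gamma α * psiFracIntegral Φ Φ' a α u τ)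
    (hint : IntegrableOn (psiIntegrand Φ Φ' α u t) (Ioo a t)) :
    u t ≤ v t * mittagLeffler α (g t * Gamma α * (Φ t - Φ a) ^ α) := by
  have hmono := (strictMonoOn_Icc_of_hasDerivAt_pos hΦ hΦ' hΦ'_pos).monotoneOn
  have hΓ := (Gamma_pos_of_pos hα).le
  refine le_mul_mittagLeffler_of_le_const_add_psiFracIntegral hα (mul_nonneg hg_nonneg hΓ) hat
    hΦ hΦ' hΦ'_pos hu hu_nonneg (fun τ hτ => ?_) hint
  have hI : 0 ≤ psiFracIntegral Φ Φ' a α u τ :=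
    psiFracIntegral_nonneg hα (hmono.mono (Icc_subset_Icc_right hτ.2))
      (fun x hx => (hΦ'_pos x ⟨hx.1, hx.2.trans_le hτ.2⟩).le)
      (fun x hx => hu_nonneg x ⟨hx.1, hx.2.trans_le hτ.2⟩)
  calc u τ ≤ v τ + g τ * Gamma α * psiFracIntegral Φ Φ' a α u τ := hle τ hτ
    _ ≤ v t + g t * Gamma α * psiFracIntegral Φ Φ' a α u τ := by
      gcongr
      exacts [hv τ hτ, hg τ hτ]

end Gronwall

theorem psi_gronwall_mittagLeffler_general
    (a b α : ℝ) (hα : 0 < α)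
    (u v g ψ ψ' : ℝ → ℝ)
    (hu_nonneg : ∀ t ∈ Icc a b, 0 ≤ u t)
    (hv_nonneg : ∀ t ∈ Icc a b, 0 ≤ v t)
    (hu_int : IntegrableOn u (Icc a b))
    (hg_nonneg : ∀ t ∈ Icc a b, 0 ≤ g t)
    (hg_mono : MonotoneOn g (Icc a b))
    (hψ : ∀ t ∈ Icc a b, HasDerivAt ψ (ψ' t) t)
    (hψ'_pos : ∀ t ∈ Icc a b, 0 < ψ' t)
    (hv_mono : MonotoneOn v (Icc a b))
    (hineq : ∀ t ∈ Icc a b,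
      u t ≤ v t + g t * ∫ τ in a..t, ψ' τ * (ψ t - ψ τ) ^ (α - 1) * u τ) :
    ∀ t ∈ Icc a b,
      u t ≤ v t * ∑' k : ℕ,
        (g t * Real.Gamma α * (ψ t - ψ a) ^ α) ^ k / Real.Gamma (α * (k : ℝ) + 1) := by
  intro t ht
  show u t ≤ v t * mittagLeffler α (g t * Gamma α * (ψ t - ψ a) ^ α)
  have hsub : Icc a t ⊆ Icc a b := Icc_subset_Icc_right ht.2
  have hψ_cont : ContinuousOn ψ (Icc a t) := fun x hx =>
    (hψ x (hsub hx)).continuousAt.continuousWithinAt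
  have hψ' : ∀ x ∈ Ioo a t, HasDerivAt ψ (ψ' x) x := fun x hx =>
    hψ x (hsub (Ioo_subset_Icc_self hx))
  have hψ'_pos' : ∀ x ∈ Ioo a t, 0 < ψ' x := fun x hx => hψ'_pos x (hsub (Ioo_subset_Icc_self hx))
  have hineq' : ∀ τ ∈ Icc a b, u τ ≤ v τ + g τ * Gamma α * psiFracIntegral ψ ψ' a α u τ :=
    fun τ hτ => by
      rw [mul_assoc, ← intervalIntegral_eq_Gamma_mul_psiFracIntegral hα hτ.1]
      exact hineq τ hτ
  by_cases hI : a < t ∧ IntegrableOn (psiIntegrand ψ ψ' α u t) (Ioo a t)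
  · exact le_mul_mittagLeffler_of_le_add_psiFracIntegral hα hI.1 hψ_cont hψ' hψ'_pos'
      (hu_int.mono_set (Ioo_subset_Icc_self.trans hsub)).aestronglyMeasurable
      (fun x hx => hu_nonneg x (hsub (Ioo_subset_Icc_self hx)))
      (fun τ hτ => hv_mono (hsub (Ioc_subset_Icc_self hτ)) ht hτ.2)
      (fun τ hτ => hg_mono (hsub (Ioc_subset_Icc_self hτ)) ht hτ.2) (hg_nonneg t ht)
      (fun τ hτ => hineq' τ (hsub (Ioc_subset_Icc_self hτ))) hI.2
  -- Otherwise the integral in `hineq t` is the junk value `0`.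
  have hzero : psiFracIntegral ψ ψ' a α u t = 0 := by
    rcases not_and_or.mp hI with h | h
    · simp [psiFracIntegral, Ioo_eq_empty h]
    · simp [psiFracIntegral, integral_undef h]
  have hD : 0 ≤ ψ t - ψ a := sub_nonneg.mpr ((strictMonoOn_Icc_of_hasDerivAt_pos hψ_cont hψ'
    hψ'_pos').monotoneOn (left_mem_Icc.mpr ht.1) (right_mem_Icc.mpr ht.1) ht.1)
  calc u t ≤ v t := by simpa [hzero] using hineq' t ht
    _ ≤ _ := le_mul_of_one_le_right (hv_nonneg t ht) (one_le_mittagLeffler hα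
      (mul_nonneg (mul_nonneg (hg_nonneg t ht) (Gamma_pos_of_pos hα).le) (rpow_nonneg hD α)))

/-- Mittag-Leffler form of the ψ-Gronwall inequality: if moreover `v` is nondecreasing, then
`u(t) ≤ v(t) E_α(g(t) Γ(α) (ψ(t)-ψ(a))^α)`, where `E_α(z) = ∑_{k≥0} z^k/Γ(αk+1)`. -/
theorem psi_gronwall_mittagLeffler
    (a b α : ℝ) (hab : a < b) (hα : 0 < α)
    (u v g ψ ψ' : ℝ → ℝ)
    (hu_nonneg : ∀ t ∈ Icc a b, 0 ≤ u t)
    (hv_nonneg : ∀ t ∈ Icc a b, 0 ≤ v t)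
    (hu_int : IntegrableOn u (Icc a b))
    (hv_int : IntegrableOn v (Icc a b))
    (hg_cont : ContinuousOn g (Icc a b))
    (hg_nonneg : ∀ t ∈ Icc a b, 0 ≤ g t)
    (hg_mono : MonotoneOn g (Icc a b))
    (hψ : ∀ t ∈ Icc a b, HasDerivAt ψ (ψ' t) t)
    (hψ'_cont : ContinuousOn ψ' (Icc a b))
    (hψ'_pos : ∀ t ∈ Icc a b, 0 < ψ' t)
    (hv_mono : MonotoneOn v (Icc a b))
    (hineq : ∀ t ∈ Icc a b,
      u t ≤ v t + g t * ∫ τ in a..t, ψ' τ * (ψ t - ψ τ) ^ (α - 1) * u τ) :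
    ∀ t ∈ Icc a b,
      u t ≤ v t * ∑' k : ℕ,
        (g t * Real.Gamma α * (ψ t - ψ a) ^ α) ^ k / Real.Gamma (α * (k : ℝ) + 1) :=
  psi_gronwall_mittagLeffler_general a b α hα u v g ψ ψ' hu_nonneg hv_nonneg hu_int hg_nonneg
    hg_mono hψ hψ'_pos hv_mono hineq
end
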